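/- For symmetric convex bodies K, T in ℝⁿ and p ≥ 1, the Dudley sum is controlled by the Sudakov supremum up to a logarithmic factor: Σ_{k ≥ 1} k^{1/p − 1} e_k(K,T) ≤ C'_p · log(1+n) · sup_{k ≥ 1} k^{1/p} e_k(K,T), where C'_p depends only on p. -/

import Mathlib

open scoped Pointwise
open Set

/-- Euclidean space -/
abbrev E (n : ℕ) := EuclideanSpace ℝ (Fin n)

/-- symmetric convex body -/
def IsSymCB {n : ℕ} (K : Set (E n)) : Prop :=
  Convex ℝ K ∧ IsCompact K ∧ (interior K).Nonempty ∧ K = -K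

/-- covering number: minimal number of translates of `T` needed to cover `K` -/
noncomputable def covN {n : ℕ} (K T : Set (E n)) : ℕ :=
  sInf {N : ℕ | ∃ s : Finset (E n), s.card ≤ N ∧ K ⊆ ⋃ x ∈ s, x +ᵥ T}

/-- covering number with centers required to lie in `K` -/
noncomputable def covN' {n : ℕ} (K T : Set (E n)) : ℕ :=
  sInf {N : ℕ | ∃ s : Finset (E n), s.card ≤ N ∧ ↑s ⊆ K ∧ K ⊆ ⋃ x ∈ s, x +ᵥ T}

/-- entropy numbers -/
noncomputable def ek {n : ℕ} (k : ℝ) (K T : Set (E n)) : ℝ :=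
  sInf {ε : ℝ | 0 < ε ∧ (covN K (ε • T) : ℝ) ≤ (2 : ℝ) ^ k}

/-- polar body -/
def polar {n : ℕ} (K : Set (E n)) : Set (E n) :=
  {x | ∀ y ∈ K, (inner ℝ x y : ℝ) ≤ 1}

/-- Talagrand's γ_p functional of `K` w.r.t. the gauge of `T` -/
noncomputable def gammaP {n : ℕ} (p : ℝ) (K T : Set (E n)) : ℝ :=
  sInf {r : ℝ | ∃ A : ℕ → Finset (E n),
    (∀ j, ↑(A j) ⊆ K ∧ (A j).card ≤ 2 ^ 2 ^ j) ∧
    r = ⨆ x ∈ K, ∑' j : ℕ, (2 : ℝ) ^ ((j : ℝ) / p) * ⨅ y ∈ A j, gauge T (x - y)}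

/-! The volume argument bounds `N(T, T/2)` by `5ⁿ ≤ 2³ⁿ`, and submultiplicativity of covering
numbers turns this into `e_{k+3n} ≤ e_k / 2`. Since `(1 - 1/(6n))³ⁿ ≥ 1/2` by Bernoulli's
inequality, `e_{n+j} ≤ 2 (1 - 1/(6n))ʲ e_n`. With `S` the supremum, the first `n` terms of the sum
are at most `S / k`, contributing `S H_n ≤ S (1 + log n)`, and the remaining terms are at most
`(2S/n) (1 - 1/(6n))ʲ`, contributing `12 S`. -/

open Topology

lemma inv_two_pow_div_le {N : ℕ} (hN : 1 ≤ N) (j : ℕ) :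
    (2⁻¹ : ℝ) ^ (j / N) ≤ 2 * (1 - (2 * N : ℝ)⁻¹) ^ j := by
  have hN' : (1 : ℝ) ≤ N := by exact_mod_cast hN
  have hr0 : 0 ≤ 1 - (2 * N : ℝ)⁻¹ := by
    rw [sub_nonneg]; exact inv_le_one_of_one_le₀ (by linarith)
  have hr1 : 1 - (2 * N : ℝ)⁻¹ ≤ 1 := sub_le_self _ (by positivity)
  have hhalf : 2⁻¹ ≤ (1 - (2 * N : ℝ)⁻¹) ^ N := by
    have h := one_add_mul_le_pow (a := -(2 * N : ℝ)⁻¹)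
      (by linarith [inv_le_one_of_one_le₀ (show (1 : ℝ) ≤ 2 * N by linarith)]) N
    rwa [show (1 : ℝ) + N * -(2 * (N : ℝ))⁻¹ = 2⁻¹ by field_simp; ring, ← sub_eq_add_neg] at h
  calc (2⁻¹ : ℝ) ^ (j / N) = 2 * 2⁻¹ ^ (j / N + 1) := by rw [pow_succ]; ring
    _ ≤ 2 * ((1 - (2 * N : ℝ)⁻¹) ^ N) ^ (j / N + 1) := by gcongr
    _ ≤ 2 * (1 - (2 * N : ℝ)⁻¹) ^ j := by
      rw [← pow_mul]
      exact mul_le_mul_of_nonneg_left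
        (pow_le_pow_of_le_one hr0 hr1 (Nat.lt_mul_div_succ j hN).le) zero_le_two

lemma nat_mul_pow_le_inv_one_sub {r : ℝ} (hr0 : 0 ≤ r) (hr1 : r < 1) (j : ℕ) :
    j * r ^ j ≤ (1 - r)⁻¹ :=
  calc j * r ^ j = ∑ _i ∈ Finset.range j, r ^ j := by simp
    _ ≤ ∑ i ∈ Finset.range j, r ^ i := Finset.sum_le_sum fun i hi =>
        pow_le_pow_of_le_one hr0 hr1.le (Finset.mem_range.1 hi).le
    _ ≤ (1 - r)⁻¹ := by
        rw [← tsum_geometric_of_lt_one hr0 hr1]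
        exact (summable_geometric_of_lt_one hr0 hr1).sum_le_tsum _ fun i _ => pow_nonneg hr0 i

namespace IsSymCB

variable {n : ℕ} {T : Set (E n)}

lemma neg_mem (hT : IsSymCB T) {x : E n} (hx : x ∈ T) : -x ∈ T := by
  rw [hT.2.2.2, Set.mem_neg, neg_neg]
  exact hx

lemma balanced (hT : IsSymCB T) : Balanced ℝ T :=
  (balanced_iff_neg_mem hT.1).2 fun _ => hT.neg_mem

lemma mem_nhds_zero (hT : IsSymCB T) : T ∈ 𝓝 (0 : E n) := by
  obtain ⟨x, hx⟩ := hT.2.2.1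
  have hneg : -x ∈ interior T :=
    interior_maximal (fun y hy => by simpa using hT.neg_mem (interior_subset hy))
      isOpen_interior.neg (by simpa using hx)
  have := hT.1.interior hx hneg (by norm_num : (0 : ℝ) ≤ 2⁻¹) (by norm_num : (0 : ℝ) ≤ 2⁻¹)
    (by norm_num)
  rw [← mem_interior_iff_mem_nhds]
  simpa using this

lemma smul_mem_nhds_zero (hT : IsSymCB T) {c : ℝ} (hc : c ≠ 0) : c • T ∈ 𝓝 (0 : E n) :=
  (set_smul_mem_nhds_zero_iff hc).2 hT.mem_nhds_zero

lemma smul_subset_smul (hT : IsSymCB T) {a b : ℝ} (ha : 0 ≤ a) (hab : a ≤ b) :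
    a • T ⊆ b • T :=
  hT.balanced.smul_mono (by simpa [abs_of_nonneg ha, abs_of_nonneg (ha.trans hab)])

end IsSymCB

section Covering

variable {n : ℕ} {K A B : Set (E n)}

lemma covN_le_card {s : Finset (E n)} (h : K ⊆ ⋃ x ∈ s, x +ᵥ A) : covN K A ≤ s.card :=
  Nat.sInf_le ⟨s, le_rfl, h⟩

lemma IsCompact.exists_cover_card_le_covN (hK : IsCompact K) (hA : A ∈ 𝓝 (0 : E n)) :
    ∃ s : Finset (E n), s.card ≤ covN K A ∧ K ⊆ ⋃ x ∈ s, x +ᵥ A := by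
  obtain ⟨s, -, hs⟩ := hK.elim_nhds_subcover (fun x => x +ᵥ A)
    fun x _ => by simpa using (vadd_mem_nhds_vadd_iff x).2 hA
  exact Nat.sInf_mem (s := {N | ∃ s : Finset (E n), s.card ≤ N ∧ K ⊆ ⋃ x ∈ s, x +ᵥ A})
    ⟨s.card, s, le_rfl, hs⟩

lemma covN_anti (hK : IsCompact K) (hA : A ∈ 𝓝 (0 : E n)) (hAB : A ⊆ B) :
    covN K B ≤ covN K A := by
  obtain ⟨s, hcard, hs⟩ := hK.exists_cover_card_le_covN hA
  exact (covN_le_card (hs.trans (Set.iUnion₂_mono fun x _ => vadd_set_mono hAB))).trans hcard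

lemma covN_le_mul (hK : IsCompact K) (hA : IsCompact A) (hA0 : A ∈ 𝓝 (0 : E n))
    (hB0 : B ∈ 𝓝 (0 : E n)) : covN K B ≤ covN K A * covN A B := by
  classical
  obtain ⟨s, hs, hKs⟩ := hK.exists_cover_card_le_covN hA0
  obtain ⟨u, hu, hAu⟩ := hA.exists_cover_card_le_covN hB0
  have hcover : K ⊆ ⋃ z ∈ (s ×ˢ u).image fun q => q.1 + q.2, z +ᵥ B := by
    intro x hx
    obtain ⟨y, hy, a, ha, rfl⟩ := Set.mem_iUnion₂.1 (hKs hx)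
    obtain ⟨v, hv, b, hb, rfl⟩ := Set.mem_iUnion₂.1 (hAu ha)
    refine Set.mem_iUnion₂.2 ⟨y + v, Finset.mem_image.2 ⟨(y, v), Finset.mem_product.2 ⟨hy, hv⟩,
      rfl⟩, b, hb, ?_⟩
    simp only [vadd_eq_add]
    abel
  calc covN K B ≤ ((s ×ˢ u).image fun q => q.1 + q.2).card := covN_le_card hcover
    _ ≤ s.card * u.card := Finset.card_image_le.trans (Finset.card_product s u).le
    _ ≤ covN K A * covN A B := Nat.mul_le_mul hs hu

lemma covN_smul_le (hA : IsCompact A) (hB0 : B ∈ 𝓝 (0 : E n)) (c : ℝ) :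
    covN (c • A) (c • B) ≤ covN A B := by
  classical
  obtain ⟨s, hs, hAs⟩ := hA.exists_cover_card_le_covN hB0
  have hcover : c • A ⊆ ⋃ z ∈ s.image (c • ·), z +ᵥ c • B := by
    rintro _ ⟨a, ha, rfl⟩
    obtain ⟨y, hy, b, hb, rfl⟩ := Set.mem_iUnion₂.1 (hAs ha)
    exact Set.mem_iUnion₂.2 ⟨c • y, Finset.mem_image_of_mem _ hy, c • b, Set.smul_mem_smul_set hb,
      by simp [smul_add]⟩
  exact (covN_le_card hcover).trans (Finset.card_image_le.trans hs)

end Covering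

section Packing

open MeasureTheory

lemma card_mul_measure_le {G : Type*} [AddGroup G] [MeasurableSpace G] [MeasurableAdd G]
    (μ : Measure G) [μ.IsAddLeftInvariant] {A B : Set G} (hA : MeasurableSet A) {s : Finset G}
    (hdisj : (s : Set G).PairwiseDisjoint (· +ᵥ A)) (hsub : ∀ x ∈ s, x +ᵥ A ⊆ B) :
    s.card * μ A ≤ μ B :=
  calc s.card * μ A = ∑ x ∈ s, μ (x +ᵥ A) := by simp [measure_vadd]
    _ = μ (⋃ x ∈ s, x +ᵥ A) := (measure_biUnion_finset hdisj fun x _ => hA.const_vadd x).symm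
    _ ≤ μ B := measure_mono (Set.iUnion₂_subset hsub)

variable {n : ℕ} {T : Set (E n)}

lemma card_mul_pow_le_of_pairwiseDisjoint (hT : IsCompact T) (hTi : (interior T).Nonempty)
    {a b : ℝ} (ha : 0 ≤ a) (hb : 0 ≤ b) {s : Finset (E n)}
    (hdisj : (s : Set (E n)).PairwiseDisjoint (· +ᵥ a • T)) (hsub : ∀ x ∈ s, x +ᵥ a • T ⊆ b • T) :
    s.card * a ^ n ≤ b ^ n := by
  have hvol : ∀ c : ℝ, 0 ≤ c → volume (c • T) = ENNReal.ofReal (c ^ n) * volume T := fun c hc => by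
    rw [Measure.addHaar_smul_of_nonneg _ hc, finrank_euclideanSpace_fin]
  have h := card_mul_measure_le volume (hT.smul a).isClosed.measurableSet hdisj hsub
  rw [hvol a ha, hvol b hb, ← mul_assoc, ← ENNReal.ofReal_natCast,
    ← ENNReal.ofReal_mul (Nat.cast_nonneg _)] at h
  exact (ENNReal.ofReal_le_ofReal_iff (by positivity)).1 <|
    (ENNReal.mul_le_mul_iff_left (Measure.measure_pos_of_nonempty_interior _ hTi).ne'
      hT.measure_lt_top.ne).1 h

namespace IsSymCB

lemma disjoint_vadd_of_sub_notMem (hT : IsSymCB T) {x y : E n}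
    (hxy : x - y ∉ (2⁻¹ : ℝ) • T) : Disjoint (x +ᵥ (4⁻¹ : ℝ) • T) (y +ᵥ (4⁻¹ : ℝ) • T) := by
  rw [Set.disjoint_left]
  rintro _ ⟨_, ⟨a, ha, rfl⟩, rfl⟩ ⟨_, ⟨b, hb, rfl⟩, hab⟩
  refine hxy ⟨2⁻¹ • b + 2⁻¹ • -a, hT.1 hb (hT.neg_mem ha) (by norm_num) (by norm_num)
    (by norm_num), ?_⟩
  simp only [vadd_eq_add] at hab
  linear_combination (norm := module) hab

lemma vadd_quarter_subset (hT : IsSymCB T) {x : E n} (hx : x ∈ T) :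
    x +ᵥ (4⁻¹ : ℝ) • T ⊆ (5 / 4 : ℝ) • T := by
  rintro _ ⟨_, ⟨t, ht, rfl⟩, rfl⟩
  refine ⟨(4 / 5 : ℝ) • x + (1 / 5 : ℝ) • t, hT.1 hx ht (by norm_num) (by norm_num) (by norm_num),
    ?_⟩
  simp only [vadd_eq_add]
  module

lemma card_le_of_pairwise_sub_notMem (hT : IsSymCB T) {s : Finset (E n)} (hsT : ↑s ⊆ T)
    (hsep : (s : Set (E n)).Pairwise fun x y => x - y ∉ (2⁻¹ : ℝ) • T) : s.card ≤ 5 ^ n := by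
  have h := card_mul_pow_le_of_pairwiseDisjoint hT.2.1 hT.2.2.1 (by norm_num) (by norm_num)
    (hsep.mono' fun _ _ => hT.disjoint_vadd_of_sub_notMem)
    fun _ hx => hT.vadd_quarter_subset (hsT hx)
  have : (s.card : ℝ) ≤ 5 ^ n :=
    calc (s.card : ℝ) = s.card * (4⁻¹ : ℝ) ^ n * 4 ^ n := by
          rw [mul_assoc, ← mul_pow]; norm_num
      _ ≤ (5 / 4 : ℝ) ^ n * 4 ^ n := by gcongr
      _ = 5 ^ n := by rw [← mul_pow]; norm_num
  exact_mod_cast this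

lemma sub_mem_half_comm (hT : IsSymCB T) {x y : E n} (h : x - y ∈ (2⁻¹ : ℝ) • T) :
    y - x ∈ (2⁻¹ : ℝ) • T := by
  obtain ⟨a, ha, hxy⟩ := h
  refine ⟨-a, hT.neg_mem ha, ?_⟩
  simp only at hxy ⊢
  rw [smul_neg, hxy, neg_sub]

/-- A maximal subset of `T` whose differences avoid `T / 2` is a `T / 2`-net of `T`. -/
lemma covN_half_le (hT : IsSymCB T) : covN T ((2⁻¹ : ℝ) • T) ≤ 5 ^ n := by
  classical
  set P : Set (Finset (E n)) :=
    {s | ↑s ⊆ T ∧ (s : Set (E n)).Pairwise fun x y => x - y ∉ (2⁻¹ : ℝ) • T}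
  have hP : ∀ s ∈ P, s.card ≤ 5 ^ n := fun s hs => hT.card_le_of_pairwise_sub_notMem hs.1 hs.2
  obtain ⟨_, ⟨s, hs, rfl⟩, hmax⟩ := BddAbove.exists_isGreatest_of_nonempty
    (S := Finset.card '' P) ⟨5 ^ n, Set.forall_mem_image.2 hP⟩ ⟨0, ∅, by simp [P], rfl⟩
  refine (covN_le_card fun t ht => ?_).trans (hP s hs)
  by_contra hcov
  have hfar : ∀ x ∈ s, t - x ∉ (2⁻¹ : ℝ) • T := fun x hx hmem =>
    hcov (Set.mem_iUnion₂.2 ⟨x, hx, t - x, hmem, by simp⟩)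
  have hts : t ∉ s := fun hts =>
    hfar t hts (by simpa using mem_of_mem_nhds (hT.smul_mem_nhds_zero (by norm_num)))
  have hins : insert t s ∈ P := by
    refine ⟨by simpa [Set.insert_subset_iff] using ⟨ht, hs.1⟩, ?_⟩
    rw [Finset.coe_insert]
    exact hs.2.insert fun x hx _ => ⟨hfar x hx, fun h => hfar x hx (hT.sub_mem_half_comm h)⟩
  have := hmax ⟨_, hins, rfl⟩
  rw [Finset.card_insert_of_notMem hts] at this
  omega

lemma covN_half_le_two_pow (hT : IsSymCB T) : covN T ((2⁻¹ : ℝ) • T) ≤ 2 ^ (3 * n) :=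
  hT.covN_half_le.trans <| by
    rw [pow_mul]
    exact Nat.pow_le_pow_left (by norm_num) n

end IsSymCB

end Packing

section EntropyNumbers

variable {n : ℕ} {K T : Set (E n)}

lemma ek_nonneg (k : ℝ) (K T : Set (E n)) : 0 ≤ ek k K T :=
  Real.sInf_nonneg fun _ hε => hε.1.le

lemma ek_le_of_covN_le {k : ℕ} {ε : ℝ} (hε : 0 < ε) (h : covN K (ε • T) ≤ 2 ^ k) :
    ek k K T ≤ ε :=
  csInf_le ⟨0, fun _ hε => hε.1.le⟩ ⟨hε, by rw [Real.rpow_natCast]; exact_mod_cast h⟩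

lemma exists_covN_smul_le_one (hK : Bornology.IsBounded K) (hT : T ∈ 𝓝 (0 : E n)) :
    ∃ ε : ℝ, 0 < ε ∧ covN K (ε • T) ≤ 1 := by
  obtain ⟨r, hr, hsub⟩ := ((NormedSpace.isVonNBounded_iff ℝ).2 hK hT).exists_pos
  refine ⟨r, hr, (covN_le_card (s := {0}) ?_).trans (by simp)⟩
  simpa using hsub r (by simp [abs_of_pos hr])

lemma covN_le_of_ek_lt (hK : IsCompact K) (hT : IsSymCB T) {k : ℕ} {ε : ℝ} (h : ek k K T < ε) :
    covN K (ε • T) ≤ 2 ^ k := by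
  obtain ⟨ε₀, hε₀, hcov⟩ := exists_covN_smul_le_one hK.isBounded hT.mem_nhds_zero
  have hne : {ε : ℝ | 0 < ε ∧ (covN K (ε • T) : ℝ) ≤ (2 : ℝ) ^ (k : ℝ)}.Nonempty :=
    ⟨ε₀, hε₀, (Nat.cast_le.2 hcov).trans (by simpa using Real.one_le_rpow one_le_two k.cast_nonneg)⟩
  obtain ⟨ε', ⟨hε'0, hε'⟩, hε'ε⟩ := exists_lt_of_csInf_lt hne h
  rw [Real.rpow_natCast] at hε'
  exact (covN_anti hK (hT.smul_mem_nhds_zero hε'0.ne') (hT.smul_subset_smul hε'0.le hε'ε.le)).trans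
    (by exact_mod_cast hε')

lemma ek_antitone (hK : IsCompact K) (hT : IsSymCB T) : Antitone fun k : ℕ => ek k K T :=
  fun _ _ hkl => le_of_forall_gt_imp_ge_of_dense fun _ hε =>
    ek_le_of_covN_le ((ek_nonneg _ _ _).trans_lt hε)
      ((covN_le_of_ek_lt hK hT hε).trans (Nat.pow_le_pow_right two_pos hkl))

lemma ek_add_le_mul (hK : IsCompact K) (hT : IsSymCB T) {η : ℝ} (hη : 0 < η) {d : ℕ}
    (hd : covN T (η • T) ≤ 2 ^ d) (k : ℕ) : ek (k + d : ℕ) K T ≤ η * ek k K T := by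
  rw [← div_le_iff₀' hη]
  refine le_of_forall_gt_imp_ge_of_dense fun ε hε => (div_le_iff₀' hη).2 ?_
  have hε0 : 0 < ε := (ek_nonneg _ _ _).trans_lt hε
  refine ek_le_of_covN_le (by positivity) ?_
  calc covN K ((η * ε) • T)
      ≤ covN K (ε • T) * covN (ε • T) (ε • η • T) := by
        rw [smul_smul, mul_comm ε η]
        exact covN_le_mul hK (hT.2.1.smul ε) (hT.smul_mem_nhds_zero hε0.ne')
          (hT.smul_mem_nhds_zero (by positivity))
    _ ≤ 2 ^ k * 2 ^ d :=
        Nat.mul_le_mul (covN_le_of_ek_lt hK hT hε)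
          ((covN_smul_le hT.2.1 (hT.smul_mem_nhds_zero hη.ne') ε).trans hd)
    _ = 2 ^ (k + d) := (pow_add 2 k d).symm

lemma ek_add_mul_le_half_pow (hK : IsCompact K) (hT : IsSymCB T) (k m : ℕ) :
    ek (k + 3 * n * m : ℕ) K T ≤ (2⁻¹ : ℝ) ^ m * ek k K T := by
  induction m with
  | zero => simp
  | succ m ih =>
    calc ek (k + 3 * n * (m + 1) : ℕ) K T = ek (k + 3 * n * m + 3 * n : ℕ) K T := by ring_nf
      _ ≤ 2⁻¹ * ek (k + 3 * n * m : ℕ) K T :=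
        ek_add_le_mul hK hT (by norm_num) hT.covN_half_le_two_pow _
      _ ≤ (2⁻¹ : ℝ) ^ (m + 1) * ek k K T := by
        rw [pow_succ', mul_assoc (2⁻¹ : ℝ)]
        exact mul_le_mul_of_nonneg_left ih (by norm_num)

lemma ek_le_geometric (hK : IsCompact K) (hT : IsSymCB T) (hn : 1 ≤ n) (j : ℕ) :
    ek (n + j : ℕ) K T ≤ 2 * (1 - (6 * n : ℝ)⁻¹) ^ j * ek n K T := by
  have h3n : 1 ≤ 3 * n := by omega
  have hgeom := inv_two_pow_div_le h3n j
  push_cast at hgeom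
  rw [← mul_assoc, show (2 : ℝ) * 3 = 6 by norm_num] at hgeom
  calc ek (n + j : ℕ) K T ≤ ek (n + 3 * n * (j / (3 * n)) : ℕ) K T :=
        ek_antitone hK hT (by have := Nat.mul_div_le j (3 * n); omega)
    _ ≤ (2⁻¹ : ℝ) ^ (j / (3 * n)) * ek n K T := ek_add_mul_le_half_pow hK hT n _
    _ ≤ 2 * (1 - (6 * n : ℝ)⁻¹) ^ j * ek n K T := by gcongr; exact ek_nonneg _ _ _

end EntropyNumbers

section GeometricDecay

variable {a : ℕ → ℝ} {n : ℕ} {r : ℝ}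

lemma nat_mul_le_of_geometric_decay (ha0 : ∀ k, 0 ≤ a k) (hanti : Antitone a) (hr0 : 0 ≤ r)
    (hr1 : r < 1) (hdecay : ∀ j, a (n + j) ≤ 2 * r ^ j * a n) (k : ℕ) :
    k * a k ≤ n * a 0 + 2 * a n * (n + (1 - r)⁻¹) := by
  have hB : 0 ≤ 2 * a n * (n + (1 - r)⁻¹) := by
    have := ha0 n; have : 0 < 1 - r := by linarith
    positivity
  rcases le_or_gt k n with hkn | hnk
  · have : k * a k ≤ n * a 0 :=
      mul_le_mul (by exact_mod_cast hkn) (hanti (Nat.zero_le k)) (ha0 k) (Nat.cast_nonneg n)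
    linarith
  · obtain ⟨j, rfl⟩ := Nat.exists_eq_add_of_le hnk.le
    have hrj : r ^ j ≤ 1 := pow_le_one₀ hr0 hr1.le
    have hjr := nat_mul_pow_le_inv_one_sub hr0 hr1 j
    have h0 : 0 ≤ n * a 0 := mul_nonneg n.cast_nonneg (ha0 0)
    calc ((n + j : ℕ) : ℝ) * a (n + j) ≤ (n + j) * (2 * r ^ j * a n) := by
          push_cast; exact mul_le_mul_of_nonneg_left (hdecay j) (by positivity)
      _ = 2 * a n * (n * r ^ j + j * r ^ j) := by ring
      _ ≤ 2 * a n * (n + (1 - r)⁻¹) := by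
          gcongr
          · exact mul_nonneg zero_le_two (ha0 n)
          · exact mul_le_of_le_one_right n.cast_nonneg hrj
      _ ≤ n * a 0 + 2 * a n * (n + (1 - r)⁻¹) := le_add_of_nonneg_left h0

lemma bddAbove_rpow_mul_of_geometric_decay {p : ℝ} (hp : 1 ≤ p) (ha0 : ∀ k, 0 ≤ a k)
    (hanti : Antitone a) (hr0 : 0 ≤ r) (hr1 : r < 1) (hdecay : ∀ j, a (n + j) ≤ 2 * r ^ j * a n) :
    BddAbove (Set.range fun k : {k : ℕ // 1 ≤ k} => (k : ℝ) ^ (1 / p) * a k) := by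
  refine ⟨_, Set.forall_mem_range.2 fun ⟨k, hk⟩ => le_trans ?_
    (nat_mul_le_of_geometric_decay ha0 hanti hr0 hr1 hdecay k)⟩
  have hk' : (1 : ℝ) ≤ k := by exact_mod_cast hk
  refine mul_le_mul_of_nonneg_right ?_ (ha0 k)
  calc (k : ℝ) ^ (1 / p) ≤ (k : ℝ) ^ (1 : ℝ) :=
        Real.rpow_le_rpow_of_exponent_le hk' ((div_le_one (by linarith)).2 hp)
    _ = k := Real.rpow_one _

def natSuccEquiv : ℕ ≃ {k : ℕ // 1 ≤ k} where
  toFun k := ⟨k + 1, Nat.le_add_left 1 k⟩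
  invFun k := k.1 - 1
  left_inv k := by simp
  right_inv k := Subtype.ext (by simp; omega)

lemma tsum_rpow_mul_le_of_geometric_decay {p S : ℝ} (hp : 1 ≤ p) (hn : 1 ≤ n)
    (ha0 : ∀ k, 0 ≤ a k) (hanti : Antitone a) (hr0 : 0 ≤ r) (hr1 : r < 1)
    (hdecay : ∀ j, a (n + j) ≤ 2 * r ^ j * a n)
    (hS : ∀ k : ℕ, 1 ≤ k → (k : ℝ) ^ (1 / p) * a k ≤ S) :
    ∑' k : {k : ℕ // 1 ≤ k}, (k : ℝ) ^ (1 / p - 1) * a k ≤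
      (1 + Real.log n + 2 / (n * (1 - r))) * S := by
  set f : ℕ → ℝ := fun k => ((k + 1 : ℕ) : ℝ) ^ (1 / p - 1) * a (k + 1)
  have hn' : (0 : ℝ) < n := by exact_mod_cast hn
  have hS0 : 0 ≤ S := (ha0 1).trans (by simpa using hS 1 le_rfl)
  have hf0 : ∀ k, 0 ≤ f k := fun k => mul_nonneg (Real.rpow_nonneg (Nat.cast_nonneg _) _) (ha0 _)
  have hhead : ∀ k, f k ≤ S / (k + 1 : ℕ) := fun k => by
    have hk : (0 : ℝ) < (k + 1 : ℕ) := by positivity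
    calc f k = ((k + 1 : ℕ) : ℝ) ^ (1 / p) * a (k + 1) / (k + 1 : ℕ) := by
          simp only [f, Real.rpow_sub_one hk.ne']; ring
      _ ≤ S / (k + 1 : ℕ) := div_le_div_of_nonneg_right (hS _ (Nat.le_add_left 1 k)) hk.le
  have htail : ∀ j, f (j + n) ≤ 2 * S / n * r ^ j := fun j => by
    calc f (j + n) ≤ (n : ℝ) ^ (1 / p - 1) * (2 * r ^ j * a n) := by
          refine mul_le_mul (Real.rpow_le_rpow_of_nonpos hn' (by push_cast; linarith) ?_) ?_
            (ha0 _) (Real.rpow_nonneg n.cast_nonneg _)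
          · rw [sub_nonpos, div_le_one (by linarith)]; exact hp
          · exact (hanti (by omega)).trans (hdecay j)
      _ = 2 * r ^ j * ((n : ℝ) ^ (1 / p) * a n) / n := by rw [Real.rpow_sub_one hn'.ne']; ring
      _ ≤ 2 * r ^ j * S / n := by
          gcongr
          exact hS n hn
      _ = 2 * S / n * r ^ j := by ring
  have hgeom := summable_geometric_of_lt_one hr0 hr1
  have hsummable : Summable fun j => f (j + n) :=
    (hgeom.mul_left _).of_nonneg_of_le (fun j => hf0 _) htail
  rw [← natSuccEquiv.tsum_eq]
  change ∑' k, f k ≤ _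
  rw [← ((summable_nat_add_iff n).1 hsummable).sum_add_tsum_nat_add n]
  calc ∑ k ∈ Finset.range n, f k + ∑' j, f (j + n)
      ≤ ∑ k ∈ Finset.range n, S / (k + 1 : ℕ) + ∑' j, 2 * S / n * r ^ j :=
        add_le_add (Finset.sum_le_sum fun k _ => hhead k)
          (hsummable.tsum_le_tsum htail (hgeom.mul_left _))
    _ = S * harmonic n + 2 / (n * (1 - r)) * S := by
        rw [tsum_mul_left, tsum_geometric_of_lt_one hr0 hr1, harmonic, Rat.cast_sum,
          Finset.mul_sum]
        congr 1
        · simp [div_eq_mul_inv]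
        · field_simp
    _ ≤ S * (1 + Real.log n) + 2 / (n * (1 - r)) * S := by
        gcongr
        exact harmonic_le_one_add_log n
    _ = (1 + Real.log n + 2 / (n * (1 - r))) * S := by ring

end GeometricDecay

lemma thirteen_add_log_le {n : ℕ} (hn : 1 ≤ n) : 13 + Real.log n ≤ 20 * Real.log (1 + n) := by
  have hn' : (1 : ℝ) ≤ n := by exact_mod_cast hn
  have h2 : Real.log 2 ≤ Real.log (1 + n) := Real.log_le_log two_pos (by linarith)
  have hlog : Real.log n ≤ Real.log (1 + n) := Real.log_le_log (by linarith) (by linarith)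
  linarith [Real.log_two_gt_d9]

theorem stmt9 (p : ℝ) (hp : 1 ≤ p) : ∃ C : ℝ, 0 < C ∧
    ∀ (n : ℕ), 1 ≤ n → ∀ (K T : Set (E n)), IsSymCB K → IsSymCB T →
    ∑' k : {k : ℕ // 1 ≤ k}, ((k : ℝ) ^ (1 / p - 1) * ek (k : ℝ) K T) ≤
      C * Real.log (1 + n) *
        ⨆ k : {k : ℕ // 1 ≤ k}, ((k : ℝ) ^ (1 / p) * ek (k : ℝ) K T) := by
  refine ⟨20, by norm_num, fun n hn K T hK hT => ?_⟩
  have hn' : (1 : ℝ) ≤ n := by exact_mod_cast hn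
  have hr0 : 0 ≤ 1 - (6 * n : ℝ)⁻¹ := sub_nonneg.2 (inv_le_one_of_one_le₀ (by linarith))
  have hr1 : 1 - (6 * n : ℝ)⁻¹ < 1 := sub_lt_self _ (by positivity)
  have hdecay := ek_le_geometric hK.2.1 hT hn
  have hbdd := bddAbove_rpow_mul_of_geometric_decay hp (fun k => ek_nonneg _ K T)
    (ek_antitone hK.2.1 hT) hr0 hr1 hdecay
  set S := ⨆ k : {k : ℕ // 1 ≤ k}, ((k : ℝ) ^ (1 / p) * ek (k : ℝ) K T)
  have hS : ∀ k : ℕ, 1 ≤ k → (k : ℝ) ^ (1 / p) * ek (k : ℝ) K T ≤ S :=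
    fun k hk => le_ciSup hbdd ⟨k, hk⟩
  have hS0 : 0 ≤ S := (ek_nonneg 1 K T).trans (by simpa using hS 1 le_rfl)
  calc _ ≤ (1 + Real.log n + 2 / (n * (1 - (1 - (6 * n : ℝ)⁻¹)))) * S :=
        tsum_rpow_mul_le_of_geometric_decay hp hn (fun k => ek_nonneg _ K T) (ek_antitone hK.2.1 hT)
          hr0 hr1 hdecay hS
    _ = (13 + Real.log n) * S := by
        congr 1
        field_simp
        ring
    _ ≤ 20 * Real.log (1 + n) * S := mul_le_mul_of_nonneg_right (thirteen_add_log_le hn) hS0
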